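/- Let N ∈ ℕ, t_i = -1 + (i-2)/N for i = 1,…,2N+3, δ_i(u) = N(σ(u - t_{i-1}) - 2σ(u - t_i) + σ(u - t_{i+1})) for i = 2,…,2N+2 with σ(u) = max{u,0}, and L_t(f)(u) = ∑_{i=2}^{2N+2} f(t_i) δ_i(u). Then for every continuous g on [-1,1], ‖L_t(g) - g‖_{C[-1,1]} ≤ 2ω(g, 1/N), where ω(g,μ) = sup{|g(v) - g(v+t)| : |t| ≤ μ, v, v+t ∈ [-1,1]} is the modulus of continuity. -/

import Mathlib

/-!
On each mesh cell `[t_j, t_{j+1}]` only the two hat functions `δ_j` and `δ_{j+1}` are nonzero, and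
there they are the barycentric weights `N (t_{j+1} - u)` and `N (u - t_j)`. Hence `L_t(g)(u)` is a
convex combination of `g(t_j)` and `g(t_{j+1})`, both within `ω(g, 1/N)` of `g(u)`, so in fact
`|L_t(g)(u) - g(u)| ≤ ω(g, 1/N)`.
-/

/-- The ReLU function. -/
def relu (u : ℝ) : ℝ := max u 0

/-- The uniform mesh points `t_i = -1 + (i-2)/N`. -/
noncomputable def meshT (N i : ℕ) : ℝ := -1 + ((i : ℝ) - 2) / N

/-- The hat functions `δ_i(u) = N(σ(u-t_{i-1}) - 2σ(u-t_i) + σ(u-t_{i+1}))`. -/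
noncomputable def hatDelta (N i : ℕ) (u : ℝ) : ℝ :=
  N * (relu (u - meshT N (i - 1)) - 2 * relu (u - meshT N i) + relu (u - meshT N (i + 1)))

/-- The quasi-interpolation operator `L_t(f)(u) = ∑_{i=2}^{2N+2} f(t_i) δ_i(u)`. -/
noncomputable def Lt (N : ℕ) (f : ℝ → ℝ) (u : ℝ) : ℝ :=
  ∑ i ∈ Finset.Icc 2 (2 * N + 2), f (meshT N i) * hatDelta N i u

/-- The modulus of continuity of `g` on `[-1,1]`. -/
noncomputable def modCont (g : ℝ → ℝ) (μ : ℝ) : ℝ :=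
  sSup {a : ℝ | ∃ v t : ℝ, |t| ≤ μ ∧ v ∈ Set.Icc (-1 : ℝ) 1 ∧
    v + t ∈ Set.Icc (-1 : ℝ) 1 ∧ a = |g v - g (v + t)|}

open Set

lemma relu_of_nonpos {x : ℝ} (h : x ≤ 0) : relu x = 0 := max_eq_right h

lemma relu_of_nonneg {x : ℝ} (h : 0 ≤ x) : relu x = x := max_eq_left h

section Mesh

variable (N : ℕ)

lemma meshT_mono : Monotone (meshT N) := fun a b h => by
  unfold meshT
  gcongr

lemma meshT_succ (i : ℕ) : meshT N (i + 1) = meshT N i + 1 / N := by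
  unfold meshT
  push_cast
  ring

lemma meshT_add_two (k : ℕ) : meshT N (k + 2) = -1 + k / N := by
  unfold meshT
  push_cast
  ring

end Mesh

lemma meshT_mem_Icc {N j : ℕ} (hN : 1 ≤ N) (h2 : 2 ≤ j) (hj : j ≤ 2 * N + 2) :
    meshT N j ∈ Icc (-1 : ℝ) 1 := by
  have hNpos : (0 : ℝ) < N := by exact_mod_cast hN
  have hj2 : (2 : ℝ) ≤ j := by exact_mod_cast h2
  have hjN : (j : ℝ) ≤ 2 * N + 2 := by exact_mod_cast hj
  unfold meshT
  constructor
  · have : 0 ≤ ((j : ℝ) - 2) / N := div_nonneg (by linarith) hNpos.le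
    linarith
  · have : ((j : ℝ) - 2) / N ≤ 2 := (div_le_iff₀ hNpos).2 (by linarith)
    linarith

lemma exists_nat_lt_mem_Icc {x : ℝ} {n : ℕ} (hn : 1 ≤ n) (hx : x ∈ Icc (0 : ℝ) n) :
    ∃ k < n, x ∈ Icc (k : ℝ) (k + 1) := by
  rcases hx.2.lt_or_eq with hlt | rfl
  · exact ⟨⌊x⌋₊, (Nat.floor_lt hx.1).2 hlt, Nat.floor_le hx.1, (Nat.lt_floor_add_one x).le⟩
  · refine ⟨n - 1, by omega, ?_, ?_⟩ <;> rw [Nat.cast_sub hn] <;> simp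

lemma exists_mem_Icc_meshT {N : ℕ} (hN : 1 ≤ N) {u : ℝ} (hu : u ∈ Icc (-1 : ℝ) 1) :
    ∃ k < 2 * N, u ∈ Icc (meshT N (k + 2)) (meshT N (k + 3)) := by
  have hNpos : (0 : ℝ) < N := by exact_mod_cast hN
  have hx : N * (u + 1) ∈ Icc (0 : ℝ) ↑(2 * N) := by
    push_cast
    constructor <;> nlinarith [hu.1, hu.2]
  obtain ⟨k, hk, hkx⟩ := exists_nat_lt_mem_Icc (by omega) hx
  refine ⟨k, hk, ?_, ?_⟩
  · rw [meshT_add_two]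
    have : (k : ℝ) / N ≤ u + 1 := (div_le_iff₀ hNpos).2 (by linarith [hkx.1])
    linarith
  · rw [show k + 3 = (k + 1) + 2 from rfl, meshT_add_two]
    have : u + 1 ≤ ((k + 1 : ℕ) : ℝ) / N := (le_div_iff₀ hNpos).2 (by push_cast; linarith [hkx.2])
    linarith

section Hat

variable (N i : ℕ) {u : ℝ}

lemma hatDelta_succ : hatDelta N (i + 1) u =
    N * (relu (u - meshT N i) - 2 * relu (u - meshT N (i + 1)) + relu (u - meshT N (i + 2))) :=
  rfl

lemma hatDelta_succ_eq_zero_of_le (h : u ≤ meshT N i) : hatDelta N (i + 1) u = 0 := by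
  have h1 := meshT_mono N (Nat.le_succ i)
  have h2 := meshT_mono N (Nat.le_succ (i + 1))
  rw [hatDelta_succ, relu_of_nonpos (by linarith), relu_of_nonpos (by linarith),
    relu_of_nonpos (by linarith)]
  ring

lemma hatDelta_succ_eq_zero_of_ge (h : meshT N (i + 2) ≤ u) : hatDelta N (i + 1) u = 0 := by
  have h1 := meshT_mono N (Nat.le_succ i)
  have h2 := meshT_mono N (Nat.le_succ (i + 1))
  rw [hatDelta_succ, relu_of_nonneg (by linarith), relu_of_nonneg (by linarith),
    relu_of_nonneg (by linarith)]
  linear_combination -(N : ℝ) * (meshT_succ N (i + 1) - meshT_succ N i)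

lemma hatDelta_succ_of_mem_Icc_left (hu : u ∈ Icc (meshT N i) (meshT N (i + 1))) :
    hatDelta N (i + 1) u = N * (u - meshT N i) := by
  have h2 := meshT_mono N (Nat.le_succ (i + 1))
  rw [hatDelta_succ, relu_of_nonneg (by linarith [hu.1]), relu_of_nonpos (by linarith [hu.2]),
    relu_of_nonpos (by linarith [hu.2])]
  ring

lemma hatDelta_succ_of_mem_Icc_right (hu : u ∈ Icc (meshT N (i + 1)) (meshT N (i + 2))) :
    hatDelta N (i + 1) u = N * (meshT N (i + 2) - u) := by
  have h1 := meshT_mono N (Nat.le_succ i)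
  rw [hatDelta_succ, relu_of_nonneg (by linarith [hu.1]), relu_of_nonneg (by linarith [hu.1]),
    relu_of_nonpos (by linarith [hu.2])]
  linear_combination -(N : ℝ) * (meshT_succ N (i + 1) - meshT_succ N i)

end Hat

lemma Lt_eq_of_mem_Icc (N : ℕ) (f : ℝ → ℝ) {k : ℕ} (hk : k < 2 * N) {u : ℝ}
    (hu : u ∈ Icc (meshT N (k + 2)) (meshT N (k + 3))) :
    Lt N f u = f (meshT N (k + 2)) * (N * (meshT N (k + 3) - u))
      + f (meshT N (k + 3)) * (N * (u - meshT N (k + 2))) := by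
  have hcell : ({k + 2, k + 3} : Finset ℕ) ⊆ Finset.Icc 2 (2 * N + 2) := by
    intro i hi
    simp only [Finset.mem_insert, Finset.mem_singleton] at hi
    simp only [Finset.mem_Icc]
    omega
  unfold Lt
  rw [← Finset.sum_subset hcell, Finset.sum_pair (by omega),
    hatDelta_succ_of_mem_Icc_right N (k + 1) hu, hatDelta_succ_of_mem_Icc_left N (k + 2) hu]
  intro i hi hi'
  simp only [Finset.mem_Icc] at hi
  simp only [Finset.mem_insert, Finset.mem_singleton, not_or] at hi'
  obtain ⟨i, rfl⟩ : ∃ i', i = i' + 1 := ⟨i - 1, by omega⟩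
  rcases lt_or_gt_of_ne hi'.1 with hlt | hgt
  · rw [hatDelta_succ_eq_zero_of_ge N i ((meshT_mono N (by omega)).trans hu.1), mul_zero]
  · rw [hatDelta_succ_eq_zero_of_le N i (hu.2.trans (meshT_mono N (by omega))), mul_zero]

lemma abs_sub_le_modCont {g : ℝ → ℝ} (hg : ContinuousOn g (Icc (-1 : ℝ) 1)) {μ v w : ℝ}
    (hv : v ∈ Icc (-1 : ℝ) 1) (hw : w ∈ Icc (-1 : ℝ) 1) (hvw : |w - v| ≤ μ) :
    |g v - g w| ≤ modCont g μ := by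
  obtain ⟨C, hC⟩ := isCompact_Icc.exists_bound_of_continuousOn hg
  refine le_csSup ⟨2 * C, ?_⟩ ⟨v, w - v, hvw, hv, by simpa using hw, by simp⟩
  rintro a ⟨v, t, -, hv, hvt, rfl⟩
  have h1 := hC v hv
  have h2 := hC (v + t) hvt
  simp only [Real.norm_eq_abs] at h1 h2
  linarith [abs_sub (g v) (g (v + t))]

theorem Lt_approx (N : ℕ) (hN : 1 ≤ N) (g : ℝ → ℝ)
    (hg : ContinuousOn g (Set.Icc (-1 : ℝ) 1)) :
    ∀ u ∈ Set.Icc (-1 : ℝ) 1, |Lt N g u - g u| ≤ 2 * modCont g (1 / N) := by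
  intro u hu
  obtain ⟨k, hk, hcell⟩ := exists_mem_Icc_meshT hN hu
  set a := meshT N (k + 2)
  set b := meshT N (k + 3)
  set ω := modCont g (1 / N)
  have hb_sub_a : b - a = 1 / N := sub_eq_iff_eq_add'.2 (meshT_succ N (k + 2))
  have hstep : (0 : ℝ) ≤ 1 / N := by positivity
  have ha : |g a - g u| ≤ ω := abs_sub_le_modCont hg (meshT_mem_Icc hN le_add_self (by omega)) hu
    (abs_le.2 ⟨by linarith [hcell.1, hcell.2], by linarith [hcell.1, hcell.2]⟩)
  have hb : |g b - g u| ≤ ω := abs_sub_le_modCont hg (meshT_mem_Icc hN (by omega) (by omega)) hu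
    (abs_le.2 ⟨by linarith [hcell.1, hcell.2], by linarith [hcell.1, hcell.2]⟩)
  have hweights : N * (b - u) + N * (u - a) = (1 : ℝ) := by
    rw [← mul_add, sub_add_sub_cancel, hb_sub_a, mul_one_div_cancel (by positivity)]
  have hconvex := convex_closedBall (g u) ω ha hb
    (mul_nonneg (Nat.cast_nonneg N) (sub_nonneg.2 hcell.2))
    (mul_nonneg (Nat.cast_nonneg N) (sub_nonneg.2 hcell.1)) hweights
  rw [Metric.mem_closedBall, Real.dist_eq, smul_eq_mul, smul_eq_mul] at hconvex
  rw [Lt_eq_of_mem_Icc N g hk hcell, mul_comm (g a), mul_comm (g b)]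
  linarith [(abs_nonneg _).trans ha]
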